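/- Fix a type α, a target value q* ∈ α, an arbitrary initial value q⊥ ∈ α, and a finite sequence (q̂_b, ĉ_b) for b = 1,…,ℓ with q̂_b ∈ α and ĉ_b ≥ 0 real, and let (q_b, c_b) and the signed increments σ_b be defined by the confidence update process. If σ_1 + σ_2 + ⋯ + σ_ℓ > 0, then the final value q_ℓ equals q* (i.e., weighted-majority aggregation outputs the target value whenever the total confidence supporting the target strictly exceeds the total confidence supporting all other values). -/
import Mathlib


open Classical

/-- The confidence update process: starting from `(q⊥, 0)`, process the pairs
`(q̂ b, ĉ b)` for `b = 1, 2, …`.  If the new guess agrees with the current one,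
add its confidence; otherwise subtract it, and if the confidence would become
negative, switch to the new guess with the negated confidence. -/
noncomputable def confProc {α : Type*} (qbot : α) (qhat : ℕ → α) (chat : ℕ → ℝ) :
    ℕ → α × ℝ
  | 0 => (qbot, 0)
  | b + 1 =>
    let s := confProc qbot qhat chat b
    if qhat (b + 1) = s.1 then (s.1, s.2 + chat (b + 1))
    else if 0 ≤ s.2 - chat (b + 1) then (s.1, s.2 - chat (b + 1))
    else (qhat (b + 1), chat (b + 1) - s.2)

/-- The signed confidence `c^±_b`: the current confidence, signed by whether the
current guess equals the target `q*`. -/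
noncomputable def signedConf {α : Type*} (qstar qbot : α) (qhat : ℕ → α)
    (chat : ℕ → ℝ) (b : ℕ) : ℝ :=
  if (confProc qbot qhat chat b).1 = qstar then (confProc qbot qhat chat b).2
  else -(confProc qbot qhat chat b).2

/-- The signed increment `σ_b`: the incoming confidence `ĉ_b`, signed by whether
the incoming guess `q̂_b` equals the target `q*`. -/
noncomputable def signedInc {α : Type*} (qstar : α) (qhat : ℕ → α)
    (chat : ℕ → ℝ) (b : ℕ) : ℝ :=
  if qhat b = qstar then chat b else -chat b

lemma confProc_nonneg {α : Type*} (qbot : α) (qhat : ℕ → α) (chat : ℕ → ℝ)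
    (hc : ∀ b, 0 ≤ chat b) : ∀ b, 0 ≤ (confProc qbot qhat chat b).2 := by
  intro b
  induction b with
  | zero => simp [confProc]
  | succ b ih =>
    simp only [confProc]
    split_ifs with h1 h2 <;> simp_all <;> linarith [hc (b+1)]

lemma signedConf_step {α : Type*} (qstar qbot : α) (qhat : ℕ → α) (chat : ℕ → ℝ)
    (hc : ∀ b, 0 ≤ chat b) (b : ℕ) :
    signedConf qstar qbot qhat chat b + signedInc qstar qhat chat (b+1)
      ≤ signedConf qstar qbot qhat chat (b+1) := by
  have hnn := confProc_nonneg qbot qhat chat hc b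
  have hch := hc (b+1)
  simp only [signedConf, signedInc, confProc]
  split_ifs <;> simp_all <;> linarith [hc (b+1)]

/-- **Weighted-majority aggregation is correct.**
In the confidence update process with nonnegative incoming confidences, if the
total signed increment `σ_1 + ⋯ + σ_ℓ` is strictly positive (the total confidence
supporting the target strictly exceeds the total confidence supporting all other
values), then the final value `q_ℓ` is the target `q*`. -/
theorem confProc_final_eq_target {α : Type*} (qstar qbot : α) (ℓ : ℕ)
    (qhat : ℕ → α) (chat : ℕ → ℝ) (hc : ∀ b, 0 ≤ chat b)
    (hsum : 0 < ∑ b ∈ Finset.Icc 1 ℓ, signedInc qstar qhat chat b) :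
    (confProc qbot qhat chat ℓ).1 = qstar := by
  have key : ∀ n, (∑ b ∈ Finset.Icc 1 n, signedInc qstar qhat chat b)
      ≤ signedConf qstar qbot qhat chat n := by
    intro n
    induction n with
    | zero => simp [signedConf, confProc]
    | succ n ih =>
      rw [Finset.sum_Icc_succ_top (by omega)]
      calc _ ≤ signedConf qstar qbot qhat chat n + signedInc qstar qhat chat (n+1) := by
              linarith
        _ ≤ _ := signedConf_step qstar qbot qhat chat hc n
  have h := lt_of_lt_of_le hsum (key ℓ)
  by_contra hne
  have hnn := confProc_nonneg qbot qhat chat hc ℓ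
  simp only [signedConf, if_neg hne] at h
  linarith
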